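/- Constancy of the Cooper-pair-condensate density for product initial states: if d : ℝ → M₄(ℂ) is a self-consistent trajectory, then κ(t) := |Tr(d(t)·A↓A↑)|² is independent of t ∈ ℝ, i.e. |Tr(d(t)·A↓A↑)| = |Tr(d(0)·A↓A↑)| for all t. -/

import Mathlib

open Matrix
open scoped ComplexOrder

noncomputable section

/-- `M₄(ℂ)`, the algebra of 4×4 complex matrices, identified with the linear
operators on the one-site fermionic Fock space `ℂ⁴`. -/
abbrev M4 : Type := Matrix (Fin 4) (Fin 4) ℂ

noncomputable instance : NormedAddCommGroup M4 := Matrix.normedAddCommGroup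
noncomputable instance : NormedSpace ℝ M4 := Matrix.normedSpace

/-- The canonical anticommutation relations for the two matrices `A↑ = Aup`,
`A↓ = Adn`: `Aₛ·Aₜ + Aₜ·Aₛ = 0` and `Aₛ·Aₜ* + Aₜ*·Aₛ = δ_{s,t}·1` for
`s, t ∈ {↑,↓}`. -/
def CAR (Aup Adn : M4) : Prop :=
  Aup * Aup + Aup * Aup = 0 ∧
  Aup * Adn + Adn * Aup = 0 ∧
  Adn * Adn + Adn * Adn = 0 ∧
  Aup * Aupᴴ + Aupᴴ * Aup = 1 ∧
  Aup * Adnᴴ + Adnᴴ * Aup = 0 ∧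
  Adn * Aupᴴ + Aupᴴ * Adn = 0 ∧
  Adn * Adnᴴ + Adnᴴ * Adn = 1

/-- `dh(c) := 2λ n↑n↓ − μ(n↑+n↓) − h(n↑−n↓) − γ(c·A↑*A↓* + c̄·A↓A↑)`,
where `nₛ := Aₛ*·Aₛ`. -/
def dh (Aup Adn : M4) (mu h lam gam : ℝ) (c : ℂ) : M4 :=
  (2 * lam : ℂ) • (Aupᴴ * Aup * (Adnᴴ * Adn))
    - (mu : ℂ) • (Aupᴴ * Aup + Adnᴴ * Adn)
    - (h : ℂ) • (Aupᴴ * Aup - Adnᴴ * Adn)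
    - (gam : ℂ) • (c • (Aupᴴ * Adnᴴ) + (starRingEnd ℂ c) • (Adn * Aup))

/-- A density matrix: Hermitian, positive semidefinite, of trace 1. -/
def IsDensityMatrix (d : M4) : Prop :=
  d.IsHermitian ∧ d.PosSemidef ∧ d.trace = 1

/-- A self-consistent trajectory: a differentiable map `d : ℝ → M₄(ℂ)` such that
`d t` is a density matrix for all `t` and
`d′(t) = −i·[dh(Tr(d(t)·A↓A↑)), d(t)]` for all `t ∈ ℝ`. -/
def SelfConsistent (Aup Adn : M4) (mu h lam gam : ℝ) (d : ℝ → M4) : Prop :=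
  (∀ t : ℝ, IsDensityMatrix (d t)) ∧
  ∀ t : ℝ, HasDerivAt d
      ((-Complex.I) •
        (dh Aup Adn mu h lam gam ((d t * (Adn * Aup)).trace) * d t
          - d t * dh Aup Adn mu h lam gam ((d t * (Adn * Aup)).trace))) t

/-!
With `b = A↓A↑` and `N = n↑ + n↓`, the CAR give `[n↑, b] = [n↓, b] = [n↑n↓, b] = -b` and
`[b*, b] = N - 1`, hence `[dh(c), b] = (2μ - 2λ)b + γc(1 - N)`. By cyclicity of the trace,
`α(t) = Tr(d(t) b)` then solves `α' = i s α` with `s = 2μ - 2λ + γ(1 - Tr(d N))`, which is real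
because `d` and `N` are Hermitian. So `α` only rotates in phase and `|α|` is constant.
-/

open Complex

theorem Matrix.trace_lie_mul {n R : Type*} [Fintype n] [DecidableEq n] [CommRing R]
    (A B C : Matrix n n R) : (⁅A, B⁆ * C).trace = (B * ⁅C, A⁆).trace := by
  simp only [Ring.lie_def, sub_mul, mul_sub, trace_sub, mul_assoc]
  rw [trace_mul_comm A, mul_assoc]

theorem Matrix.IsHermitian.star_trace_mul {n R : Type*} [Fintype n] [CommRing R] [StarRing R]
    {A B : Matrix n n R} (hA : A.IsHermitian) (hB : B.IsHermitian) :
    star (A * B).trace = (A * B).trace := by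
  rw [← trace_conjTranspose, conjTranspose_mul, hA.eq, hB.eq, trace_mul_comm]

theorem norm_eq_of_forall_hasDerivAt_I_mul {f : ℝ → ℂ} (s : ℝ → ℝ)
    (hf : ∀ t, HasDerivAt f (I * s t * f t) t) (t₀ t₁ : ℝ) : ‖f t₀‖ = ‖f t₁‖ := by
  have hsq : ∀ t, HasDerivAt (‖f ·‖ ^ 2) 0 t := fun t => by
    convert (hf t).norm_sq using 1
    simp only [Complex.inner, mul_re, mul_im, I_re, I_im, ofReal_re, ofReal_im, conj_re, conj_im]
    ring
  have hconst := is_const_of_deriv_eq_zero (fun t => (hsq t).differentiableAt)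
    (fun t => (hsq t).deriv) t₀ t₁
  exact (sq_eq_sq₀ (norm_nonneg _) (norm_nonneg _)).mp hconst

theorem eq_zero_of_add_self_eq_zero {M : Type*} [AddCommGroup M] [Module ℂ M] {x : M}
    (h : x + x = 0) : x = 0 := by
  rw [← two_smul ℂ] at h
  simpa using h

attribute [local instance] LieRing.ofAssociativeRing

namespace CAR

variable {Aup Adn : M4}

theorem up_mul_up (hCAR : CAR Aup Adn) : Aup * Aup = 0 := eq_zero_of_add_self_eq_zero hCAR.1

theorem dn_mul_dn (hCAR : CAR Aup Adn) : Adn * Adn = 0 := eq_zero_of_add_self_eq_zero hCAR.2.2.1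

theorem up_mul_dn (hCAR : CAR Aup Adn) : Aup * Adn = -(Adn * Aup) :=
  eq_neg_of_add_eq_zero_left hCAR.2.1

theorem up_mul_upStar (hCAR : CAR Aup Adn) : Aup * Aupᴴ = 1 - Aupᴴ * Aup :=
  eq_sub_of_add_eq hCAR.2.2.2.1

theorem up_mul_dnStar (hCAR : CAR Aup Adn) : Aup * Adnᴴ = -(Adnᴴ * Aup) :=
  eq_neg_of_add_eq_zero_left hCAR.2.2.2.2.1

theorem dn_mul_upStar (hCAR : CAR Aup Adn) : Adn * Aupᴴ = -(Aupᴴ * Adn) :=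
  eq_neg_of_add_eq_zero_left hCAR.2.2.2.2.2.1

theorem dn_mul_dnStar (hCAR : CAR Aup Adn) : Adn * Adnᴴ = 1 - Adnᴴ * Adn :=
  eq_sub_of_add_eq hCAR.2.2.2.2.2.2

theorem numberUp_mul_pair (hCAR : CAR Aup Adn) : Aupᴴ * Aup * (Adn * Aup) = 0 :=
  calc Aupᴴ * Aup * (Adn * Aup) = Aupᴴ * (Aup * Adn) * Aup := by noncomm_ring
    _ = -(Aupᴴ * Adn * (Aup * Aup)) := by rw [hCAR.up_mul_dn]; noncomm_ring
    _ = 0 := by rw [hCAR.up_mul_up]; noncomm_ring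

theorem numberDn_mul_pair (hCAR : CAR Aup Adn) : Adnᴴ * Adn * (Adn * Aup) = 0 :=
  calc Adnᴴ * Adn * (Adn * Aup) = Adnᴴ * (Adn * Adn) * Aup := by noncomm_ring
    _ = 0 := by rw [hCAR.dn_mul_dn]; noncomm_ring

theorem pair_mul_numberUp (hCAR : CAR Aup Adn) : Adn * Aup * (Aupᴴ * Aup) = Adn * Aup :=
  calc Adn * Aup * (Aupᴴ * Aup) = Adn * (Aup * Aupᴴ) * Aup := by noncomm_ring
    _ = Adn * Aup - Adn * Aupᴴ * (Aup * Aup) := by rw [hCAR.up_mul_upStar]; noncomm_ring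
    _ = Adn * Aup := by rw [hCAR.up_mul_up]; noncomm_ring

theorem pair_mul_numberDn (hCAR : CAR Aup Adn) : Adn * Aup * (Adnᴴ * Adn) = Adn * Aup :=
  calc Adn * Aup * (Adnᴴ * Adn) = Adn * (Aup * Adnᴴ) * Adn := by noncomm_ring
    _ = -((Adn * Adnᴴ) * (Aup * Adn)) := by rw [hCAR.up_mul_dnStar]; noncomm_ring
    _ = Adn * Aup - Adnᴴ * (Adn * Adn) * Aup := by
      rw [hCAR.dn_mul_dnStar, hCAR.up_mul_dn]; noncomm_ring
    _ = Adn * Aup := by rw [hCAR.dn_mul_dn]; noncomm_ring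

theorem pair_mul_pairStar (hCAR : CAR Aup Adn) :
    Adn * Aup * (Aupᴴ * Adnᴴ)
      = 1 - (Aupᴴ * Aup + Adnᴴ * Adn) + Aupᴴ * Adnᴴ * (Adn * Aup) :=
  calc Adn * Aup * (Aupᴴ * Adnᴴ) = Adn * (Aup * Aupᴴ) * Adnᴴ := by noncomm_ring
    _ = Adn * Adnᴴ - (Adn * Aupᴴ) * (Aup * Adnᴴ) := by rw [hCAR.up_mul_upStar]; noncomm_ring
    _ = 1 - Adnᴴ * Adn - Aupᴴ * (Adn * Adnᴴ) * Aup := by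
      rw [hCAR.dn_mul_upStar, hCAR.up_mul_dnStar, ← hCAR.dn_mul_dnStar]; noncomm_ring
    _ = 1 - (Aupᴴ * Aup + Adnᴴ * Adn) + Aupᴴ * Adnᴴ * (Adn * Aup) := by
      rw [hCAR.dn_mul_dnStar]; noncomm_ring

theorem lie_numberUp_pair (hCAR : CAR Aup Adn) : ⁅Aupᴴ * Aup, Adn * Aup⁆ = -(Adn * Aup) := by
  rw [Ring.lie_def, hCAR.numberUp_mul_pair, hCAR.pair_mul_numberUp, zero_sub]

theorem lie_numberDn_pair (hCAR : CAR Aup Adn) : ⁅Adnᴴ * Adn, Adn * Aup⁆ = -(Adn * Aup) := by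
  rw [Ring.lie_def, hCAR.numberDn_mul_pair, hCAR.pair_mul_numberDn, zero_sub]

theorem lie_doubleOccupancy_pair (hCAR : CAR Aup Adn) :
    ⁅Aupᴴ * Aup * (Adnᴴ * Adn), Adn * Aup⁆ = -(Adn * Aup) := by
  rw [Ring.lie_def, mul_assoc, hCAR.numberDn_mul_pair, mul_zero, ← mul_assoc,
    hCAR.pair_mul_numberUp, hCAR.pair_mul_numberDn, zero_sub]

theorem lie_pairStar_pair (hCAR : CAR Aup Adn) :
    ⁅Aupᴴ * Adnᴴ, Adn * Aup⁆ = Aupᴴ * Aup + Adnᴴ * Adn - 1 := by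
  rw [Ring.lie_def, hCAR.pair_mul_pairStar]
  abel

theorem lie_dh_pair (hCAR : CAR Aup Adn) (mu h lam gam : ℝ) (c : ℂ) :
    ⁅dh Aup Adn mu h lam gam c, Adn * Aup⁆
      = (2 * mu - 2 * lam : ℂ) • (Adn * Aup)
        + (gam * c : ℂ) • (1 - (Aupᴴ * Aup + Adnᴴ * Adn)) := by
  simp only [dh, sub_lie, add_lie, smul_lie, lie_self, hCAR.lie_numberUp_pair,
    hCAR.lie_numberDn_pair, hCAR.lie_doubleOccupancy_pair, hCAR.lie_pairStar_pair]
  module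

end CAR

theorem HasDerivAt.trace_mul_const {d : ℝ → M4} {d' : M4} {t : ℝ} (hd : HasDerivAt d d' t)
    (B : M4) : HasDerivAt (fun t => (d t * B).trace) (d' * B).trace t :=
  (Matrix.traceLinearMap (Fin 4) ℝ ℂ ∘ₗ LinearMap.mulRight ℝ B).toContinuousLinearMap
    |>.hasFDerivAt.comp_hasDerivAt t hd

theorem SelfConsistent.hasDerivAt_trace_mul_pair {Aup Adn : M4} (hCAR : CAR Aup Adn)
    {mu h lam gam : ℝ} {d : ℝ → M4} (hd : SelfConsistent Aup Adn mu h lam gam d) (t : ℝ) :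
    HasDerivAt (fun t => (d t * (Adn * Aup)).trace)
      (I * ↑(2 * mu - 2 * lam + gam * (1 - (d t * (Aupᴴ * Aup + Adnᴴ * Adn)).trace.re))
        * (d t * (Adn * Aup)).trace) t := by
  set N := Aupᴴ * Aup + Adnᴴ * Adn
  set c := (d t * (Adn * Aup)).trace
  obtain ⟨hdH, -, htr⟩ := hd.1 t
  have hN : N.IsHermitian :=
    (isHermitian_conjTranspose_mul_self Aup).add (isHermitian_conjTranspose_mul_self Adn)
  have htrN_real : ((d t * N).trace.re : ℂ) = (d t * N).trace :=
    conj_eq_iff_re.mp (hdH.star_trace_mul hN)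
  have htrN_compl : (d t * (1 - N)).trace = 1 - (d t * N).trace := by
    rw [mul_sub, mul_one, trace_sub, htr]
  have htr_lie : (d t * ⁅dh Aup Adn mu h lam gam c, Adn * Aup⁆).trace
      = (2 * mu - 2 * lam + gam * (1 - (d t * N).trace)) * c := by
    rw [hCAR.lie_dh_pair, mul_add, mul_smul_comm, mul_smul_comm, trace_add, trace_smul,
      trace_smul, htrN_compl, smul_eq_mul, smul_eq_mul]
    ring
  convert (hd.2 t).trace_mul_const (Adn * Aup) using 1
  rw [smul_mul_assoc, trace_smul, ← Ring.lie_def, trace_lie_mul, ← lie_skew, mul_neg, trace_neg,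
    htr_lie]
  push_cast
  rw [htrN_real]
  ring

theorem cooper_condensate_density_constant_general (Aup Adn : M4) (hCAR : CAR Aup Adn)
    (mu h lam gam : ℝ)
    (d : ℝ → M4) (hd : SelfConsistent Aup Adn mu h lam gam d) :
    ∀ t : ℝ, ‖(d t * (Adn * Aup)).trace‖
      = ‖(d 0 * (Adn * Aup)).trace‖ :=
  fun t => norm_eq_of_forall_hasDerivAt_I_mul _ (hd.hasDerivAt_trace_mul_pair hCAR) t 0

/-- constancy of the Cooper-pair-condensate density:
`|Tr(d(t)·A↓A↑)| = |Tr(d(0)·A↓A↑)|` for all `t`. -/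
theorem cooper_condensate_density_constant (Aup Adn : M4) (hCAR : CAR Aup Adn)
    (mu h lam gam : ℝ) (hgam : 0 ≤ gam)
    (d : ℝ → M4) (hd : SelfConsistent Aup Adn mu h lam gam d) :
    ∀ t : ℝ, ‖(d t * (Adn * Aup)).trace‖
      = ‖(d 0 * (Adn * Aup)).trace‖ :=
  cooper_condensate_density_constant_general Aup Adn hCAR mu h lam gam d hd
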